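/- arXiv:1811.01556 — 5 statements merged into one kernel-verified Lean document; each statement's English description precedes it below -/
import Mathlib

section
/- Let A ⊂ P^m (m ≥ 1, over ℂ) be a set of m+2 points in linearly general position. Then A imposes m+2 independent conditions on the space of quadratic forms ℂ[z_0,…,z_m]_2. -/
/-! For `p ∈ A`, the other `m + 1` points form a basis `b` of `ℂ^{m+1}`. As `p` is a point distinct
from each of them, its coordinate vector has two nonzero entries `i ≠ j`, so the quadric
`b_i^* b_j^*` vanishes on `A \ {p}` but not at `p`. Rescaled, these quadrics map onto the standard
basis of `ℂ^A`. -/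

open MvPolynomial Function

/-- Complex projective `n`-space, as the projectivization of `ℂ^{n+1}`. -/
abbrev Pn (n : ℕ) := Projectivization ℂ (Fin (n + 1) → ℂ)

/-- The linear span (as a vector subspace) of a set of projective points. -/
def pspan {V : Type*} [AddCommGroup V] [Module ℂ V] (E : Set (Projectivization ℂ V)) :
    Submodule ℂ V :=
  Submodule.span ℂ (Projectivization.rep '' E)

/-- `E` minimally spans `q`: `q` lies in the span of `E` but in the span of no proper subset. -/
def MinimallySpans {V : Type*} [AddCommGroup V] [Module ℂ V]
    (E : Set (Projectivization ℂ V)) (q : Projectivization ℂ V) : Prop :=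
  q.rep ∈ pspan E ∧ ∀ E' ⊂ E, q.rep ∉ pspan E'

/-- `E ⊂ P^n` imposes `|E|` independent conditions on degree-`t` forms:
the evaluation map from `ℂ[z_0,…,z_n]_t` to `ℂ^E` is surjective. -/
def ImposesIndep (n t : ℕ) (E : Set (Pn n)) : Prop :=
  Surjective (fun (g : homogeneousSubmodule (Fin (n + 1)) ℂ t) (p : E) =>
    eval (Projectivization.rep (p : Pn n)) (g : MvPolynomial (Fin (n + 1)) ℂ))

/-- The `d`-th power of the linear form with coefficient vector `v`. -/
noncomputable def linPow (n d : ℕ) (v : Fin (n + 1) → ℂ) : MvPolynomial (Fin (n + 1)) ℂ :=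
  (∑ i, C (v i) * X i) ^ d

/-- The span of the image under the degree-`d` Veronese embedding of a set `S ⊂ P^n`,
as a subspace of the polynomial ring. -/
noncomputable def veroneseSpan (n d : ℕ) (S : Set (Pn n)) : Submodule ℂ (MvPolynomial (Fin (n + 1)) ℂ) :=
  Submodule.span ℂ ((fun p : Pn n => linPow n d (Projectivization.rep p)) '' S)

/-- `ν_d(S)` minimally spans the point `q` of `P^r = P(ℂ[z_0,…,z_n]_d)`. -/
def MinSpansVer (n d : ℕ) (S : Set (Pn n))
    (q : Projectivization ℂ (homogeneousSubmodule (Fin (n + 1)) ℂ d)) : Prop :=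
  (Projectivization.rep q).1 ∈ veroneseSpan n d S ∧
    ∀ S' ⊂ S, (Projectivization.rep q).1 ∉ veroneseSpan n d S'

/-- `S ⊂ P^m` is in linearly general position: every subset of cardinality at most `m + 1`
is linearly independent. -/
def LGP (m : ℕ) (S : Set (Pn m)) : Prop :=
  ∀ B ⊆ S, B.Finite → B.ncard ≤ m + 1 →
    LinearIndependent ℂ (fun p : B => Projectivization.rep (p : Pn m))

/-- The evaluation linear map from degree-`t` forms to `ℂ^E`. -/
noncomputable def evalLM (n t : ℕ) (E : Set (Pn n)) :
    homogeneousSubmodule (Fin (n + 1)) ℂ t →ₗ[ℂ] (E → ℂ) where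
  toFun g p := eval (Projectivization.rep (p : Pn n)) g.1
  map_add' g₁ g₂ := by funext p; simp
  map_smul' c g := by funext p; simp [MvPolynomial.smul_eval]

theorem Projectivization.rep_ne_smul_rep {K V : Type*} [DivisionRing K] [AddCommGroup V]
    [Module K V] {p q : Projectivization K V} (h : p ≠ q) (c : K) : p.rep ≠ c • q.rep := fun hc =>
  h <| by rw [← p.mk_rep, ← q.mk_rep, mk_eq_mk_iff']; exact ⟨c, hc.symm⟩

namespace Module.Basis

variable {K V ι : Type*}

theorem one_lt_card_support_repr [Semiring K] [AddCommMonoid V] [Module K V] [Nonempty ι]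
    (b : Basis ι K V) {x : V} (hx : ∀ i (c : K), x ≠ c • b i) : 1 < (b.repr x).support.card := by
  by_contra! h
  obtain ⟨i, c, hc⟩ := Finsupp.card_support_le_one'.1 h
  exact hx i c (by rw [← b.repr_symm_single, ← hc, LinearEquiv.symm_apply_apply])

variable {R σ : Type*} [Field K] [CommRing R] [Fintype ι] [Fintype σ] [DecidableEq σ]

noncomputable def coordMvPolynomial (b : Basis ι R (σ → R)) (i : ι) : MvPolynomial σ R :=
  (LinearMap.toMatrix' b.equivFun.toLinearMap).toMvPolynomial i

theorem eval_coordMvPolynomial (b : Basis ι R (σ → R)) (i : ι) (x : σ → R) :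
    eval x (b.coordMvPolynomial i) = b.repr x i := by
  rw [coordMvPolynomial, Matrix.toMvPolynomial_eval_eq_apply, LinearMap.toMatrix'_mulVec]
  rfl

theorem isHomogeneous_coordMvPolynomial (b : Basis ι R (σ → R)) (i : ι) :
    (b.coordMvPolynomial i).IsHomogeneous 1 :=
  Matrix.toMvPolynomial_isHomogeneous _ _

-- The quadric is `b_i^* b_j^*` for two indices `i ≠ j` in the support of `x`.
theorem exists_quadric_ne_zero_and_vanishing [Nonempty ι] (b : Basis ι K (σ → K)) {x : σ → K}
    (hx : ∀ i (c : K), x ≠ c • b i) :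
    ∃ g ∈ homogeneousSubmodule σ K 2, eval x g ≠ 0 ∧ ∀ k, eval (b k) g = 0 := by
  obtain ⟨i, hi, j, hj, hij⟩ := Finset.one_lt_card.1 (b.one_lt_card_support_repr hx)
  refine ⟨b.coordMvPolynomial i * b.coordMvPolynomial j,
    (mem_homogeneousSubmodule _ _).2
      ((b.isHomogeneous_coordMvPolynomial i).mul (b.isHomogeneous_coordMvPolynomial j)),
    ?_, fun k => ?_⟩
  · rw [map_mul, eval_coordMvPolynomial, eval_coordMvPolynomial]
    exact mul_ne_zero (Finsupp.mem_support_iff.1 hi) (Finsupp.mem_support_iff.1 hj)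
  · rw [map_mul, eval_coordMvPolynomial, eval_coordMvPolynomial, b.repr_self]
    obtain rfl | hki := eq_or_ne k i
    · rw [Finsupp.single_eq_of_ne hij.symm, mul_zero]
    · rw [Finsupp.single_eq_of_ne hki.symm, zero_mul]

end Module.Basis

theorem LGP.exists_quadric_ne_zero_and_vanishing {m : ℕ} {A : Set (Pn m)} (hlgp : LGP m A)
    (hcard : A.ncard = m + 2) {p : Pn m} (hp : p ∈ A) :
    ∃ g ∈ homogeneousSubmodule (Fin (m + 1)) ℂ 2,
      eval p.rep g ≠ 0 ∧ ∀ q ∈ A, q ≠ p → eval q.rep g = 0 := by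
  set B := A \ {p}
  have hB : B.ncard = m + 1 := by rw [Set.ncard_sdiff_singleton_of_mem hp, hcard]; rfl
  have hBfin : B.Finite := Set.finite_of_ncard_ne_zero (by omega)
  have := hBfin.fintype
  have : Nonempty B := (Set.nonempty_of_ncard_ne_zero (by omega)).to_subtype
  let b := basisOfLinearIndependentOfCardEqFinrank (hlgp B Set.sdiff_subset hBfin hB.le)
    (by rw [Module.finrank_fin_fun, ← Nat.card_eq_fintype_card, Nat.card_coe_set_eq, hB])
  obtain ⟨g, hg, hgp, hgB⟩ := b.exists_quadric_ne_zero_and_vanishing (x := p.rep)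
    fun q c => by
      simpa [b] using Projectivization.rep_ne_smul_rep (Ne.symm q.2.2) c
  exact ⟨g, hg, hgp, fun q hq hqp => by simpa [b] using hgB ⟨q, hq, hqp⟩⟩

theorem imposesIndep_of_forall_exists_separating {n t : ℕ} {E : Set (Pn n)} [Finite E]
    (h : ∀ p ∈ E, ∃ g ∈ homogeneousSubmodule (Fin (n + 1)) ℂ t,
      eval p.rep g ≠ 0 ∧ ∀ q ∈ E, q ≠ p → eval q.rep g = 0) :
    ImposesIndep n t E := by
  classical
  change Surjective (evalLM n t E)
  rw [← LinearMap.range_eq_top, eq_top_iff, ← (Pi.basisFun ℂ E).span_eq, Submodule.span_le]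
  rintro _ ⟨p, rfl⟩
  obtain ⟨g, hg, hgp, hgE⟩ := h p p.2
  refine ⟨(eval p.1.rep g)⁻¹ • ⟨g, hg⟩, funext fun q => ?_⟩
  obtain rfl | hqp := eq_or_ne q p
  · simp [evalLM, smul_eval, hgp]
  · simp [evalLM, smul_eval, hgE q q.2 (Subtype.coe_ne_coe.2 hqp), hqp]

theorem stmt_5_general (m : ℕ) (A : Set (Pn m))
    (hcard : A.ncard = m + 2) (hlgp : LGP m A) :
    ImposesIndep m 2 A :=
  have : Finite A := (Set.finite_of_ncard_ne_zero (by omega)).to_subtype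
  imposesIndep_of_forall_exists_separating fun _ hp =>
    hlgp.exists_quadric_ne_zero_and_vanishing hcard hp

/-- `m + 2` points of `P^m` in linearly general position impose independent
conditions on quadrics. -/
theorem stmt_5 (m : ℕ) (hm : 1 ≤ m) (A : Set (Pn m)) (hA : A.Finite)
    (hcard : A.ncard = m + 2) (hlgp : LGP m A) :
    ImposesIndep m 2 A :=
  stmt_5_general m A hcard hlgp
end

section
/- Let A ⊂ P^m (m ≥ 2, over ℂ) be a set of m+2 points in linearly general position. Then the common zero locus of all quadratic forms vanishing on A equals A. -/
open MvPolynomial Function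

/-!
Given `p ∉ A`, it suffices to cover `A` by two sets whose spans miss `p`: the product of a linear
form vanishing on the first span and one vanishing on the second is a quadric through `A` that does
not vanish at `p`.

If the vectors of `B ∪ T` are independent, then `span B ⊓ span T = span (B ∩ T)`; hence when
`B ⊆ A` minimally spans `p`, no `T ⊆ A` with `B ⊄ T` and `|B ∪ T| ≤ m + 1` spans `p`. If some
`B ⊆ A` of at most `m` points spans `p`, take it minimal: it has two points `b₁ ≠ b₂` (as `p ∉ A`),
some `c ∈ A \ B` exists, and `A \ {b₁, c}`, `(B \ {b₂}) ∪ {c}` is the cover. Otherwise no `m`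
points of `A` span `p`, and `A` is covered by `m` of its points and the remaining two.
-/
open Set Submodule

theorem LinearIndepOn.span_image_inf_span_image {R M ι : Type*} [Ring R] [AddCommGroup M]
    [Module R M] {v : ι → M} {s t : Set ι} (h : LinearIndepOn R v (s ∪ t)) :
    span R (v '' s) ⊓ span R (v '' t) = span R (v '' (s ∩ t)) := by
  refine le_antisymm ?_ (le_inf (span_mono (image_mono inter_subset_left))
    (span_mono (image_mono inter_subset_right)))
  rintro x ⟨hs, ht⟩
  obtain ⟨l₁, hl₁, rfl⟩ := (Finsupp.mem_span_image_iff_linearCombination R).1 hs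
  obtain ⟨l₂, hl₂, hl⟩ := (Finsupp.mem_span_image_iff_linearCombination R).1 ht
  obtain rfl : l₂ = l₁ := linearIndepOn_iffₛ.1 h l₂ (Finsupp.supported_mono subset_union_right hl₂)
    l₁ (Finsupp.supported_mono subset_union_left hl₁) hl
  refine (Finsupp.mem_span_image_iff_linearCombination R).2 ⟨l₂, ?_, rfl⟩
  rw [Finsupp.supported_inter]
  exact ⟨hl₁, hl₂⟩

section LinearForms

variable {σ K : Type*} [Fintype σ] [DecidableEq σ]

noncomputable def linearFormPoly [CommSemiring K] (f : (σ → K) →ₗ[K] K) : MvPolynomial σ K :=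
  ∑ i, C (f (Pi.single i 1)) * X i

theorem isHomogeneous_linearFormPoly [CommSemiring K] (f : (σ → K) →ₗ[K] K) :
    (linearFormPoly f).IsHomogeneous 1 :=
  IsHomogeneous.sum _ _ _ fun i _ => by
    simpa using (isHomogeneous_C σ (f (Pi.single i 1))).mul (isHomogeneous_X K i)

theorem eval_linearFormPoly [CommSemiring K] (f : (σ → K) →ₗ[K] K) (w : σ → K) :
    eval w (linearFormPoly f) = f w := by
  conv_rhs => rw [← Finset.univ_sum_single w]
  simp only [linearFormPoly, map_sum, eval_mul, eval_C, eval_X]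
  refine Finset.sum_congr rfl fun i _ => ?_
  rw [mul_comm, ← smul_eq_mul, ← f.map_smul, ← Pi.single_smul, smul_eq_mul, mul_one]

theorem exists_linearForm_notMem [Field K] {W : Submodule K (σ → K)} {v : σ → K} (hv : v ∉ W) :
    ∃ ℓ : MvPolynomial σ K, ℓ.IsHomogeneous 1 ∧ (∀ w ∈ W, eval w ℓ = 0) ∧ eval v ℓ ≠ 0 := by
  obtain ⟨f, hfv, hfW⟩ := W.exists_dual_map_eq_bot_of_notMem hv inferInstance
  refine ⟨linearFormPoly f, isHomogeneous_linearFormPoly f, fun w hw => ?_, ?_⟩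
  · rw [eval_linearFormPoly]
    exact LinearMap.le_ker_iff_map.2 hfW hw
  · rwa [eval_linearFormPoly]

end LinearForms

section Projective

variable {V : Type*} [AddCommGroup V] [Module ℂ V] {p : Projectivization ℂ V}

def SplitsAvoiding (A : Set (Projectivization ℂ V)) (p : Projectivization ℂ V) : Prop :=
  ∃ A₁ A₂, A ⊆ A₁ ∪ A₂ ∧ p.rep ∉ pspan A₁ ∧ p.rep ∉ pspan A₂

theorem mem_of_rep_mem_pspan {B : Set (Projectivization ℂ V)} (hB : B.Subsingleton)
    (hp : p.rep ∈ pspan B) : p ∈ B := by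
  rcases hB.eq_empty_or_singleton with rfl | ⟨a, rfl⟩
  · simp only [pspan, image_empty, span_empty, mem_bot] at hp
    exact absurd hp p.rep_nonzero
  · rw [pspan, image_singleton, mem_span_singleton] at hp
    obtain ⟨c, hc⟩ := hp
    rw [mem_singleton_iff, ← p.mk_rep, ← a.mk_rep]
    exact (Projectivization.mk_eq_mk_iff' ℂ _ _ p.rep_nonzero a.rep_nonzero).2 ⟨c, hc⟩

theorem exists_minimallySpans_subset {T : Set (Projectivization ℂ V)} (hT : T.Finite)
    (hp : p.rep ∈ pspan T) : ∃ B ⊆ T, MinimallySpans B p := by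
  have hfin : {B | B ⊆ T ∧ p.rep ∈ pspan B}.Finite :=
    hT.finite_subsets.subset fun B hB => hB.1
  obtain ⟨B, -, hmin⟩ := hfin.isPWO.exists_le_minimal ⟨subset_rfl, hp⟩
  exact ⟨B, hmin.prop.1, hmin.prop.2, fun B' hB' hB'p =>
    hmin.not_prop_of_lt hB' ⟨hB'.subset.trans hmin.prop.1, hB'p⟩⟩

theorem MinimallySpans.rep_notMem_pspan {B T : Set (Projectivization ℂ V)}
    (hB : MinimallySpans B p) (hind : LinearIndepOn ℂ Projectivization.rep (B ∪ T))
    (hBT : ¬B ⊆ T) : p.rep ∉ pspan T := fun hT =>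
  hB.2 _ (inter_ssubset_left_iff.2 hBT) <| by
    rw [pspan, ← hind.span_image_inf_span_image]
    exact ⟨hB.1, hT⟩

end Projective

section Cover

variable {m : ℕ} {A : Set (Pn m)} {p : Pn m}

theorem LGP.linearIndepOn {B : Set (Pn m)} (h : LGP m A) (hA : A.Finite) (hB : B ⊆ A)
    (hcard : B.ncard ≤ m + 1) : LinearIndepOn ℂ Projectivization.rep B :=
  h B hB (hA.subset hB) hcard

theorem splitsAvoiding_of_minimallySpans (hlgp : LGP m A) (hcard : A.ncard = m + 2) (hp : p ∉ A)
    {B : Set (Pn m)} (hBA : B ⊆ A) (hB : MinimallySpans B p) (hBm : B.ncard ≤ m) :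
    SplitsAvoiding A p := by
  have hA : A.Finite := finite_of_ncard_ne_zero (by omega)
  have hBfin : B.Finite := hA.subset hBA
  have hB₂ : 1 < B.ncard := by
    by_contra! h
    exact hp (hBA (mem_of_rep_mem_pspan ((ncard_le_one hBfin).1 h) hB.1))
  obtain ⟨b₁, hb₁, b₂, hb₂, hb₁₂⟩ := (one_lt_ncard hBfin).1 hB₂
  obtain ⟨c, hcA, hcB⟩ : (A \ B).Nonempty :=
    nonempty_of_ncard_ne_zero (by rw [ncard_sdiff hBA hBfin]; omega)
  refine ⟨A \ {b₁, c}, insert c (B \ {b₂}), fun a ha => ?_, ?_, ?_⟩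
  · by_cases h : a = b₁ ∨ a = c
    · rcases h with rfl | rfl
      exacts [Or.inr (Or.inr ⟨hb₁, hb₁₂⟩), Or.inr (Or.inl rfl)]
    · exact Or.inl ⟨ha, by simpa using h⟩
  · refine hB.rep_notMem_pspan (hlgp.linearIndepOn hA (union_subset hBA sdiff_subset) ?_)
      fun h => (h hb₁).2 (by simp)
    have hsub : B ∪ A \ {b₁, c} ⊆ A \ {c} := fun a ha => by
      rcases ha with ha | ⟨ha, ha'⟩
      · exact ⟨hBA ha, fun hac => hcB (hac ▸ ha)⟩
      · exact ⟨ha, fun hac => ha' (Or.inr hac)⟩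
    calc (B ∪ A \ {b₁, c}).ncard ≤ (A \ {c}).ncard := ncard_le_ncard hsub hA.sdiff
      _ = m + 1 := by rw [ncard_sdiff_singleton_of_mem hcA, hcard]; omega
  · refine hB.rep_notMem_pspan (hlgp.linearIndepOn hA ?_ ?_) fun h => ?_
    · exact union_subset hBA (insert_subset hcA (sdiff_subset.trans hBA))
    · calc (B ∪ insert c (B \ {b₂})).ncard ≤ (insert c B).ncard :=
            ncard_le_ncard (union_subset (subset_insert c B)
              (insert_subset_insert sdiff_subset)) (hBfin.insert c)
        _ ≤ m + 1 := by rw [ncard_insert_of_notMem hcB hBfin]; omega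
    · rcases h hb₂ with h | h
      exacts [hcB (h ▸ hb₂), h.2 rfl]

theorem splitsAvoiding_of_forall_rep_notMem_pspan (hm : 2 ≤ m) (hcard : A.ncard = m + 2)
    (h : ∀ T ⊆ A, T.ncard ≤ m → p.rep ∉ pspan T) :
    SplitsAvoiding A p := by
  have hA : A.Finite := finite_of_ncard_ne_zero (by omega)
  obtain ⟨x, hx, y, hy, hxy⟩ := (one_lt_ncard hA).1 (by omega)
  have hxyA : {x, y} ⊆ A := pair_subset hx hy
  refine ⟨A \ {x, y}, {x, y}, subset_sdiff_union A {x, y}, h _ sdiff_subset ?_, h _ hxyA ?_⟩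
  · rw [ncard_sdiff hxyA (toFinite _), hcard, ncard_pair hxy]; omega
  · rwa [ncard_pair hxy]

theorem LGP.splitsAvoiding (hlgp : LGP m A) (hm : 2 ≤ m) (hcard : A.ncard = m + 2) (hp : p ∉ A) :
    SplitsAvoiding A p := by
  by_cases h : ∀ T ⊆ A, T.ncard ≤ m → p.rep ∉ pspan T
  · exact splitsAvoiding_of_forall_rep_notMem_pspan hm hcard h
  push Not at h
  obtain ⟨T, hTA, hTm, hpT⟩ := h
  have hT : T.Finite := (finite_of_ncard_ne_zero (by omega : A.ncard ≠ 0)).subset hTA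
  obtain ⟨B, hBT, hB⟩ := exists_minimallySpans_subset hT hpT
  exact splitsAvoiding_of_minimallySpans hlgp hcard hp (hBT.trans hTA) hB
    ((ncard_le_ncard hBT hT).trans hTm)

end Cover

theorem SplitsAvoiding.exists_quadric {n : ℕ} {A : Set (Pn n)} {p : Pn n}
    (hAp : SplitsAvoiding A p) :
    ∃ g ∈ homogeneousSubmodule (Fin (n + 1)) ℂ 2,
      (∀ a ∈ A, eval a.rep g = 0) ∧ eval p.rep g ≠ 0 := by
  obtain ⟨A₁, A₂, hA, h₁, h₂⟩ := hAp
  obtain ⟨ℓ₁, hℓ₁, hA₁, hp₁⟩ := exists_linearForm_notMem h₁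
  obtain ⟨ℓ₂, hℓ₂, hA₂, hp₂⟩ := exists_linearForm_notMem h₂
  refine ⟨ℓ₁ * ℓ₂, (mem_homogeneousSubmodule _ _).2 (hℓ₁.mul hℓ₂), fun a ha => ?_, ?_⟩
  · rw [eval_mul]
    rcases hA ha with h | h
    · rw [hA₁ _ (subset_span (mem_image_of_mem _ h)), zero_mul]
    · rw [hA₂ _ (subset_span (mem_image_of_mem _ h)), mul_zero]
  · rw [eval_mul]
    exact mul_ne_zero hp₁ hp₂

theorem stmt_7_general (m : ℕ) (hm : 2 ≤ m) (A : Set (Pn m))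
    (hcard : A.ncard = m + 2) (hlgp : LGP m A) :
    {p : Pn m | ∀ g ∈ homogeneousSubmodule (Fin (m + 1)) ℂ 2,
        (∀ a ∈ A, eval (Projectivization.rep a) g = 0) →
          eval (Projectivization.rep p) g = 0} = A := by
  refine Subset.antisymm (fun p hp => ?_) fun a ha g _ hgA => hgA a ha
  by_contra hpA
  obtain ⟨g, hg, hgA, hgp⟩ := (hlgp.splitsAvoiding hm hcard hpA).exists_quadric
  exact hgp (hp g hg hgA)

/-- for `m ≥ 2` and `m + 2` points in linearly general position, the common
zero locus of the quadrics through `A` is exactly `A`. -/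
theorem stmt_7 (m : ℕ) (hm : 2 ≤ m) (A : Set (Pn m)) (hA : A.Finite)
    (hcard : A.ncard = m + 2) (hlgp : LGP m A) :
    {p : Pn m | ∀ g ∈ homogeneousSubmodule (Fin (m + 1)) ℂ 2,
        (∀ a ∈ A, eval (Projectivization.rep a) g = 0) →
          eval (Projectivization.rep p) g = 0} = A :=
  stmt_7_general m hm A hcard hlgp
end

section
/- Let H ⊂ P^m (m ≥ 2, over ℂ) be a hyperplane and S ⊂ P^m a finite set with exactly one point p of S outside H. Suppose that S ∩ H is exactly the common zero locus inside H of all quadratic forms on H vanishing on S ∩ H, and that S ∩ H imposes independent conditions on quadratic forms on H. Then S is exactly the common zero locus in P^m of all quadratic forms on P^m vanishing on S. -/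
/-! A quadric `g` of `H` through `S ∩ H` extends to the quadric `g - c z_m²` of `P^m`, with `c`
chosen so that it also vanishes at the point `q` of `S` off `H`; hence a point of `H` on every
quadric through `S` lies on every quadric of `H` through `S ∩ H`, so in `S`. Off `H`, the
reducible quadrics `z_m ℓ`, with `ℓ` a linear form vanishing at `q`, contain `S` and meet the
complement of `H` only in `q`. -/

open MvPolynomial Function

theorem Projectivization.eq_of_rep_eq_smul {K V : Type*} [DivisionRing K] [AddCommGroup V]
    [Module K V] {p q : Projectivization K V} {a : K} (h : p.rep = a • q.rep) : p = q := by
  rw [← Projectivization.mk_rep p, ← Projectivization.mk_rep q,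
    Projectivization.mk_eq_mk_iff']
  exact ⟨a, h.symm⟩

section Extension

variable {K : Type*} [Field K] {n : ℕ}

theorem MvPolynomial.IsHomogeneous.exists_extension_eval_eq_zero {d : ℕ}
    {g : MvPolynomial (Fin n) K} (hg : g.IsHomogeneous d) (hd : d ≠ 0)
    {w : Fin (n + 1) → K} (hw : w (Fin.last n) ≠ 0) :
    ∃ G : MvPolynomial (Fin (n + 1)) K, G.IsHomogeneous d ∧ eval w G = 0 ∧
      ∀ v : Fin (n + 1) → K, v (Fin.last n) = 0 → eval v G = eval (fun i => v i.castSucc) g := by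
  set c := eval (fun i => w i.castSucc) g / w (Fin.last n) ^ d
  refine ⟨rename Fin.castSucc g - C c * X (Fin.last n) ^ d,
    hg.rename_isHomogeneous.sub (isHomogeneous_C_mul_X_pow c _ d), ?_, fun v hv => ?_⟩
  · simp only [c, map_sub, eval_mul, eval_C, eval_pow, eval_X, eval_rename,
      div_mul_cancel₀ _ (pow_ne_zero d hw), comp_def, sub_self]
  · simp [eval_rename, hv, hd, comp_def]

theorem eq_smul_of_forall_quadric_eval_eq_zero {v w : Fin (n + 1) → K}
    (hv : v (Fin.last n) ≠ 0) (hw : w (Fin.last n) ≠ 0)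
    (h : ∀ G : MvPolynomial (Fin (n + 1)) K, G.IsHomogeneous 2 →
      (∀ u : Fin (n + 1) → K, u (Fin.last n) = 0 → eval u G = 0) → eval w G = 0 →
        eval v G = 0) :
    v = (v (Fin.last n) / w (Fin.last n)) • w := by
  funext i
  set G : MvPolynomial (Fin (n + 1)) K :=
    X (Fin.last n) * (C (w (Fin.last n)) * X i - C (w i) * X (Fin.last n))
  have hG : G.IsHomogeneous 2 :=
    (isHomogeneous_X K _).mul ((isHomogeneous_C_mul_X _ _).sub (isHomogeneous_C_mul_X _ _))
  have hGw : eval w G = 0 := by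
    simp only [G, eval_mul, eval_sub, eval_C, eval_X]
    ring
  have hvi := h G hG (fun u hu => by simp [G, hu]) hGw
  simp only [G, eval_mul, eval_sub, eval_C, eval_X, mul_eq_zero, hv, false_or] at hvi
  rw [Pi.smul_apply, smul_eq_mul, div_mul_eq_mul_div, eq_div_iff hw]
  linear_combination hvi

end Extension

theorem stmt_10_general (m : ℕ) (S : Set (Pn m))
    (H : Set (Pn m)) (hH : H = {p : Pn m | Projectivization.rep p (Fin.last m) = 0})
    (h1 : (S \ H).ncard = 1)
    (hbase : {p : Pn m | p ∈ H ∧ ∀ g ∈ homogeneousSubmodule (Fin m) ℂ 2,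
        (∀ a ∈ S ∩ H, eval (fun i : Fin m => Projectivization.rep a i.castSucc) g = 0) →
          eval (fun i : Fin m => Projectivization.rep p i.castSucc) g = 0} = S ∩ H) :
    {p : Pn m | ∀ g ∈ homogeneousSubmodule (Fin (m + 1)) ℂ 2,
        (∀ a ∈ S, eval (Projectivization.rep a) g = 0) →
          eval (Projectivization.rep p) g = 0} = S := by
  subst hH
  obtain ⟨q, hq⟩ := Set.ncard_eq_one.mp h1
  obtain ⟨hqS, hq_last⟩ : q ∈ S \ {p : Pn m | p.rep (Fin.last m) = 0} := hq ▸ rfl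
  have vanishes_on_S (G : MvPolynomial (Fin (m + 1)) ℂ)
      (hG : ∀ a ∈ S, a.rep (Fin.last m) = 0 → eval a.rep G = 0) (hGq : eval q.rep G = 0) :
      ∀ a ∈ S, eval a.rep G = 0 := by
    intro a ha
    by_cases ha_last : a.rep (Fin.last m) = 0
    · exact hG a ha ha_last
    · obtain rfl : a = q := by
        rw [← Set.mem_singleton_iff, ← hq]
        exact ⟨ha, ha_last⟩
      exact hGq
  refine Set.Subset.antisymm (fun p hp => ?_) (fun p hp g _ hg => hg p hp)
  by_cases hp_last : p.rep (Fin.last m) = 0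
  · refine (hbase.subset ⟨hp_last, fun g hg hgS => ?_⟩).1
    obtain ⟨G, hG, hGq, hG_ext⟩ :=
      ((mem_homogeneousSubmodule 2 g).mp hg).exists_extension_eval_eq_zero two_ne_zero hq_last
    rw [← hG_ext _ hp_last]
    exact hp G hG (vanishes_on_S G (fun a ha ha_last =>
      (hG_ext _ ha_last).trans (hgS a ⟨ha, ha_last⟩)) hGq)
  · have hpq := eq_smul_of_forall_quadric_eval_eq_zero hp_last hq_last fun G hG hG_H hGq =>
      hp G hG (vanishes_on_S G (fun a _ ha_last => hG_H _ ha_last) hGq)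
    exact Projectivization.eq_of_rep_eq_smul hpq ▸ hqS

/-- part (ii) of the Lemma: with coordinates chosen so that `H = {z_m = 0}`,
if `S` has exactly one point outside `H`, `S ∩ H` imposes independent conditions on the
quadratic forms of `H`, and `S ∩ H` is exactly the common zero locus inside `H` of the
quadrics of `H` through `S ∩ H`, then `S` is exactly the common zero locus in `P^m` of the
quadrics through `S`. -/
theorem stmt_10 (m : ℕ) (hm : 2 ≤ m) (S : Set (Pn m)) (hS : S.Finite)
    (H : Set (Pn m)) (hH : H = {p : Pn m | Projectivization.rep p (Fin.last m) = 0})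
    (h1 : (S \ H).ncard = 1)
    (hind : Surjective (fun (g : homogeneousSubmodule (Fin m) ℂ 2) (p : ↥(S ∩ H)) =>
      eval (fun i : Fin m => Projectivization.rep (p : Pn m) i.castSucc)
        (g : MvPolynomial (Fin m) ℂ)))
    (hbase : {p : Pn m | p ∈ H ∧ ∀ g ∈ homogeneousSubmodule (Fin m) ℂ 2,
        (∀ a ∈ S ∩ H, eval (fun i : Fin m => Projectivization.rep a i.castSucc) g = 0) →
          eval (fun i : Fin m => Projectivization.rep p i.castSucc) g = 0} = S ∩ H) :
    {p : Pn m | ∀ g ∈ homogeneousSubmodule (Fin (m + 1)) ℂ 2,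
        (∀ a ∈ S, eval (Projectivization.rep a) g = 0) →
          eval (Projectivization.rep p) g = 0} = S :=
  stmt_10_general m S H hH h1 hbase
end

section
/- Let d ≥ 1, n ≥ 1, and let S, A ⊂ P^n be finite sets with A ⊆ Z := A ∪ S. Let G ⊂ P^n be a hypersurface of degree t (1 ≤ t ≤ d) defined by a form g. Suppose q ∈ P^r (r = C(n+d,n)-1) is a point such that ν_d(A) and ν_d(S) both minimally span q, and suppose that Z \ (Z ∩ G) imposes |Z \ (Z ∩ G)| independent conditions on forms of degree d - t. Then A \ (A ∩ G) = S \ (S ∩ G). -/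
open MvPolynomial Function

lemma finsupp_degree_eq (n : ℕ) (m : Fin (n+1) →₀ ℕ) :
    m.degree = ∑ i, m i := by
  rw [Finsupp.degree]
  exact Finset.sum_subset (Finset.subset_univ _) (by
    intro x _ hx
    simpa using (Finsupp.notMem_support_iff.mp hx))

lemma linPow_expand (n d : ℕ) (v : Fin (n + 1) → ℂ) :
    linPow n d v = ∑ k ∈ Finset.piAntidiag (Finset.univ : Finset (Fin (n+1))) d,
      monomial (Finsupp.equivFunOnFinite.symm k)
        ((Nat.multinomial Finset.univ k : ℂ) * ∏ i, v i ^ k i) := by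
  rw [linPow, Finset.sum_pow_eq_sum_piAntidiag]
  refine Finset.sum_congr rfl fun k hk => ?_
  have h1 : ∀ i : Fin (n+1), (C (v i) * X i) ^ k i
      = C (v i ^ k i) * X i ^ k i := by
    intro i; rw [mul_pow, ← C_pow]
  rw [Finset.prod_congr rfl fun i _ => h1 i, Finset.prod_mul_distrib, ← map_prod]
  have h2 : (∏ i, (X i : MvPolynomial (Fin (n+1)) ℂ) ^ k i)
      = monomial (Finsupp.equivFunOnFinite.symm k) 1 := by
    rw [← prod_X_pow_eq_monomial]
    refine (Finset.prod_subset (Finset.subset_univ _) ?_).symm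
    intro x _ hx
    have : k x = 0 := by simpa [Finsupp.notMem_support_iff] using hx
    simp [this]
  rw [h2]
  rw [C_mul_monomial, mul_one]
  rw [← C_eq_coe_nat, C_mul_monomial]

noncomputable def verLfun (n d : ℕ) (h : MvPolynomial (Fin (n+1)) ℂ) :
    MvPolynomial (Fin (n+1)) ℂ →ₗ[ℂ] ℂ :=
  ∑ k ∈ Finset.piAntidiag (Finset.univ : Finset (Fin (n+1))) d,
    (coeff (Finsupp.equivFunOnFinite.symm k) h * ((Nat.multinomial Finset.univ k : ℂ))⁻¹) •
      lcoeff ℂ (Finsupp.equivFunOnFinite.symm k)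

lemma coeff_linPow (n d : ℕ) (v : Fin (n + 1) → ℂ) (k : Fin (n+1) → ℕ)
    (hk : k ∈ Finset.piAntidiag (Finset.univ : Finset (Fin (n+1))) d) :
    coeff (Finsupp.equivFunOnFinite.symm k) (linPow n d v)
      = (Nat.multinomial Finset.univ k : ℂ) * ∏ i, v i ^ k i := by
  rw [linPow_expand, coeff_sum]
  rw [Finset.sum_eq_single k]
  · simp [coeff_monomial]
  · intro b _ hbk
    rw [coeff_monomial, if_neg]
    exact fun hc => hbk (Finsupp.equivFunOnFinite.symm.injective hc)
  · exact fun hc => absurd hk hc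

lemma verLfun_linPow (n d : ℕ) (h : MvPolynomial (Fin (n+1)) ℂ)
    (hh : h.IsHomogeneous d) (v : Fin (n + 1) → ℂ) :
    verLfun n d h (linPow n d v) = eval v h := by
  rw [verLfun, LinearMap.sum_apply]
  have step : ∀ k ∈ Finset.piAntidiag (Finset.univ : Finset (Fin (n+1))) d,
      ((coeff (Finsupp.equivFunOnFinite.symm k) h * ((Nat.multinomial Finset.univ k : ℂ))⁻¹) •
        lcoeff ℂ (Finsupp.equivFunOnFinite.symm k)) (linPow n d v)
      = coeff (Finsupp.equivFunOnFinite.symm k) h * ∏ i, v i ^ k i := by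
    intro k hk
    rw [LinearMap.smul_apply, lcoeff_apply, coeff_linPow n d v k hk, smul_eq_mul]
    have hm : ((Nat.multinomial Finset.univ k : ℂ)) ≠ 0 := by
      exact_mod_cast (Nat.multinomial_pos _ _).ne'
    field_simp
  rw [Finset.sum_congr rfl step]
  -- now RHS: eval
  rw [eval_eq' v h]
  set emb : (Fin (n+1) → ℕ) ↪ (Fin (n+1) →₀ ℕ) :=
    ⟨fun k => Finsupp.equivFunOnFinite.symm k, Finsupp.equivFunOnFinite.symm.injective⟩ with hemb
  rw [show (∑ k ∈ Finset.piAntidiag (Finset.univ : Finset (Fin (n+1))) d,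
        coeff (Finsupp.equivFunOnFinite.symm k) h * ∏ i, v i ^ k i)
      = ∑ m ∈ (Finset.piAntidiag (Finset.univ : Finset (Fin (n+1))) d).map emb,
          coeff m h * ∏ i, v i ^ m i from ?_]
  · refine (Finset.sum_subset ?_ ?_).symm
    · intro m hm
      rw [Finset.mem_map]
      refine ⟨(m : Fin (n+1) → ℕ), ?_, by simp [hemb]⟩
      simp only [Finset.mem_piAntidiag]
      refine ⟨?_, fun i _ => Finset.mem_univ i⟩
      by_contra hne
      exact (MvPolynomial.mem_support_iff.mp hm)
        (hh.coeff_eq_zero (by rw [finsupp_degree_eq]; exact fun hc => hne hc))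
    · intro m _ hm
      rw [MvPolynomial.notMem_support_iff.mp hm, zero_mul]
  · rw [Finset.sum_map]
    refine Finset.sum_congr rfl fun k hk => ?_
    simp [hemb]

lemma key_subset (n d t : ℕ) (htd : t ≤ d)
    (S A : Set (Pn n))
    (g : MvPolynomial (Fin (n + 1)) ℂ)
    (hgh : g ∈ homogeneousSubmodule (Fin (n + 1)) ℂ t)
    (G : Set (Pn n)) (hG : G = {p : Pn n | eval (Projectivization.rep p) g = 0})
    (q : Projectivization ℂ (homogeneousSubmodule (Fin (n + 1)) ℂ d))
    (hqA : MinSpansVer n d A q) (hqS : MinSpansVer n d S q)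
    (hind : ImposesIndep n (d - t) ((A ∪ S) \ ((A ∪ S) ∩ G))) :
    A \ (A ∩ G) ⊆ S \ (S ∩ G) := by
  classical
  intro p hp
  obtain ⟨hpA, hpG'⟩ := hp
  have hpG : p ∉ G := fun h => hpG' ⟨hpA, h⟩
  suffices hpS : p ∈ S by exact ⟨hpS, fun h => hpG h.2⟩
  by_contra hpS
  set f : Pn n → MvPolynomial (Fin (n+1)) ℂ :=
    fun p => linPow n d (Projectivization.rep p) with hf
  -- coefficients over A
  obtain ⟨l, hl, hlq⟩ := (Finsupp.mem_span_image_iff_linearCombination ℂ).mp (show (Projectivization.rep q).1 ∈ Submodule.span ℂ (f '' A) from hqA.1)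
  rw [Finsupp.mem_supported] at hl
  -- coefficients over S
  obtain ⟨m, hm, hmq⟩ := (Finsupp.mem_span_image_iff_linearCombination ℂ).mp (show (Projectivization.rep q).1 ∈ Submodule.span ℂ (f '' S) from hqS.1)
  rw [Finsupp.mem_supported] at hm
  -- l p ≠ 0
  have hlp : l p ≠ 0 := by
    intro h0
    refine hqA.2 (A \ {p}) (Set.sdiff_singleton_ssubset.mpr hpA) ?_
    refine show _ ∈ Submodule.span ℂ (f '' (A \ {p})) from (Finsupp.mem_span_image_iff_linearCombination ℂ).mpr ⟨l, ?_, hlq⟩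
    rw [Finsupp.mem_supported]
    intro z hz
    refine ⟨hl hz, fun hzp => ?_⟩
    rw [Set.mem_singleton_iff] at hzp
    subst hzp
    exact Finsupp.mem_support_iff.mp hz h0
  -- the separating form
  set E : Set (Pn n) := (A ∪ S) \ ((A ∪ S) ∩ G) with hE
  have hpE : p ∈ E := ⟨Or.inl hpA, fun hc => hpG hc.2⟩
  obtain ⟨f₀, hf₀⟩ := hind (fun z : E => if (z : Pn n) = p then 1 else 0)
  have hf₀p : eval (Projectivization.rep p) (f₀ : MvPolynomial (Fin (n+1)) ℂ) = 1 := by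
    have := congrFun hf₀ ⟨p, hpE⟩
    simpa using this
  have hf₀z : ∀ z ∈ E, z ≠ p → eval (Projectivization.rep z) (f₀ : MvPolynomial (Fin (n+1)) ℂ) = 0 := by
    intro z hz hzp
    have := congrFun hf₀ ⟨z, hz⟩
    simpa [hzp] using this
  -- the degree-d form h
  set h : MvPolynomial (Fin (n+1)) ℂ := g * f₀.1 with hh
  have hhd : h.IsHomogeneous d := by
    have := (mem_homogeneousSubmodule _ _ |>.mp hgh).mul
      (mem_homogeneousSubmodule _ _ |>.mp f₀.2)
    rwa [Nat.add_sub_cancel' htd] at this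
  -- the relation
  have hrel : Finsupp.linearCombination ℂ f (l - m) = 0 := by
    rw [map_sub, hlq, hmq, sub_self]
  have h0 : Finsupp.linearCombination ℂ (fun z => eval (Projectivization.rep z) h) (l - m) = 0 := by
    have := congrArg (verLfun n d h) hrel
    rw [Finsupp.apply_linearCombination, map_zero] at this
    have hfun : (fun z : Pn n => eval (Projectivization.rep z) h) = ⇑(verLfun n d h) ∘ f :=
      funext fun z => (verLfun_linPow n d h hhd _).symm
    rw [hfun]
    exact this
  -- evaluate the sum
  rw [Finsupp.linearCombination_apply, Finsupp.sum] at h0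
  have hsupp : ((l - m).support : Set (Pn n)) ⊆ A ∪ S := by
    intro z hz
    have := Finsupp.support_sub (f := l) (g := m) hz
    rcases Finset.mem_union.mp this with h | h
    · exact Or.inl (hl h)
    · exact Or.inr (hm h)
  have hmp : m p = 0 := by
    by_contra hc
    exact hpS (hm (Finsupp.mem_support_iff.mpr hc))
  have hlmp : (l - m) p ≠ 0 := by
    rw [Finsupp.sub_apply, hmp, sub_zero]; exact hlp
  have hsing : ∑ z ∈ (l - m).support, (l - m) z • eval (Projectivization.rep z) h
      = (l - m) p * eval (Projectivization.rep p) h := by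
    rw [Finset.sum_eq_single_of_mem p (Finsupp.mem_support_iff.mpr hlmp)]
    · rfl
    · intro z hz hzp
      have hzAS : z ∈ A ∪ S := hsupp hz
      have : eval (Projectivization.rep z) h = 0 := by
        by_cases hzG : z ∈ G
        · rw [hh, map_mul]
          rw [hG] at hzG
          rw [hzG, zero_mul]
        · rw [hh, map_mul, hf₀z z ⟨hzAS, fun hc => hzG hc.2⟩ hzp, mul_zero]
      rw [this, smul_zero]
  rw [hsing] at h0
  have hgp : eval (Projectivization.rep p) g ≠ 0 := by
    rw [hG] at hpG
    exact hpG
  rw [hh, map_mul, hf₀p, mul_one] at h0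
  exact hlmp (by
    rcases mul_eq_zero.mp h0 with h | h
    · exact h
    · exact absurd h hgp)

/-- if `ν_d(A)` and `ν_d(S)` both minimally span `q`, `G = {g = 0}` is a
degree-`t` hypersurface, and `Z \ (Z ∩ G)` (where `Z = A ∪ S`) imposes independent conditions
on degree-`(d - t)` forms, then `A \ (A ∩ G) = S \ (S ∩ G)`. -/
theorem stmt_11 (n d t : ℕ) (hn : 1 ≤ n) (hd : 1 ≤ d) (ht1 : 1 ≤ t) (htd : t ≤ d)
    (S A : Set (Pn n)) (hS : S.Finite) (hA : A.Finite)
    (g : MvPolynomial (Fin (n + 1)) ℂ) (hg0 : g ≠ 0)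
    (hgh : g ∈ homogeneousSubmodule (Fin (n + 1)) ℂ t)
    (G : Set (Pn n)) (hG : G = {p : Pn n | eval (Projectivization.rep p) g = 0})
    (q : Projectivization ℂ (homogeneousSubmodule (Fin (n + 1)) ℂ d))
    (hqA : MinSpansVer n d A q) (hqS : MinSpansVer n d S q)
    (hind : ImposesIndep n (d - t) ((A ∪ S) \ ((A ∪ S) ∩ G))) :
    A \ (A ∩ G) = S \ (S ∩ G) := by
  have hind' : ImposesIndep n (d - t) ((S ∪ A) \ ((S ∪ A) ∩ G)) := by
    rwa [Set.union_comm]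
  exact Set.Subset.antisymm
    (key_subset n d t htd S A g hgh G hG q hqA hqS hind)
    (key_subset n d t htd A S g hgh G hG q hqS hqA hind')
end

section
/- Fix n ≥ 1, d ≥ 4, k = ⌊d/2⌋, r = C(n+d,n) - 1. Let q ∈ P^r and S ⊂ P^n finite with ν_d(S) minimally spanning q. Assume |S| ≤ C(n+k-1,n) and that S imposes |S| independent conditions on ℂ[z_0,…,z_n]_{k-1}. Then S is the unique finite set of cardinality at most |S| whose degree-d Veronese image spans q; in particular q has rank |S| and the additive decomposition of the corresponding degree-d form into |S| d-th powers of linear forms is unique up to reordering and scaling of the linear forms. -/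
/-!
Write `ℓ_v` for the linear form with coefficient vector `v`. For a form `G` of degree `m ≤ e`, a
suitably normalised `G(∂)` is a linear map sending every `ℓ_v^e` to `G(v) ℓ_v^(e-m)`; for `m = e`
this gives a linear functional `ℓ_v^e ↦ G(v)`.

Put `k = ⌊d/2⌋`, and let the form `F` representing `q` also lie in the span of `ν_d(A)`. As `S`
imposes independent conditions in degree `k - 1 ≤ d - k`, each `p ∈ S` has a form of degree
`d - k` vanishing on `S \ {p}` but not at `p`. Write `F = c ℓ_p^d + (terms from S \ {p})`, with
`c ≠ 0` by minimality, and apply that form: `ℓ_p^k` lies in the span of `ν_k(A)`. Degree-`k`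
separating forms make `ν_k(S)` linearly independent, so `|S| ≤ dim span ν_k(A) ≤ |A| ≤ |S|` and
the two spans coincide. For `a ∉ S`, multiplying the separators by a linear form vanishing at `a`
shows that `ℓ_a^k` is not in the span of `ν_k(S)`. Hence `A ⊆ S`, and `A = S` by counting.
-/

open MvPolynomial Function

namespace MvPolynomial

variable {σ K : Type*} [Fintype σ] [Field K]

noncomputable def linForm (v : σ → K) : MvPolynomial σ K :=
  ∑ i, C (v i) * X i

theorem eval_linForm (v u : σ → K) : eval u (linForm v) = ∑ i, v i * u i := by
  simp [linForm]

theorem isHomogeneous_linForm (v : σ → K) : (linForm v).IsHomogeneous 1 :=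
  IsHomogeneous.sum _ _ _ fun _ _ => isHomogeneous_C_mul_X _ _

theorem linForm_ne_zero {v : σ → K} (hv : v ≠ 0) : linForm v ≠ 0 := by
  classical
  intro h
  apply hv
  funext i
  simpa [eval_linForm, Pi.single_apply] using congrArg (eval (Pi.single i 1)) h

theorem pderiv_linForm_pow (i : σ) (v : σ → K) (e : ℕ) :
    pderiv i (linForm v ^ e) = ((e : K) * v i) • linForm v ^ (e - 1) := by
  classical
  have hlin : pderiv i (linForm v) = C (v i) := by
    simp [linForm, pderiv_X, Pi.single_apply]
  rw [Derivation.leibniz_pow, hlin]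
  simp only [smul_eq_mul, nsmul_eq_mul, smul_eq_C_mul, map_mul, map_natCast]
  ring

theorem exists_eval_linForm_eq_zero_ne_zero {p a : Projectivization K (σ → K)} (h : p ≠ a) :
    ∃ u : σ → K, eval a.rep (linForm u) = 0 ∧ eval p.rep (linForm u) ≠ 0 := by
  classical
  have hpa : p.rep ∉ K ∙ a.rep := by
    rw [Submodule.mem_span_singleton]
    rintro ⟨c, hc⟩
    apply h
    rw [← p.mk_rep, ← a.mk_rep, Projectivization.mk_eq_mk_iff' K _ _ p.rep_nonzero a.rep_nonzero]
    exact ⟨c, hc⟩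
  obtain ⟨f, hfp, hfa⟩ := Submodule.exists_le_ker_of_notMem hpa
  set u : σ → K := fun i => f fun j => if i = j then 1 else 0
  have hu : ∀ x, eval x (linForm u) = f x := fun x => by
    rw [eval_linForm, f.pi_apply_eq_sum_univ x]
    exact Finset.sum_congr rfl fun i _ => mul_comm _ _
  exact ⟨u, by rw [hu]; exact hfa (Submodule.mem_span_singleton_self _), by rwa [hu]⟩

variable [CharZero K]

theorem exists_linearMap_linForm_pow_monomial {e : ℕ} (α : σ →₀ ℕ) (hα : α.degree ≤ e) :
    ∃ D : MvPolynomial σ K →ₗ[K] MvPolynomial σ K,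
      ∀ v, D (linForm v ^ e) = eval v (monomial α 1) • linForm v ^ (e - α.degree) := by
  induction hm : α.degree generalizing α with
  | zero =>
    obtain rfl : α = 0 := (Finsupp.degree_eq_zero_iff α).mp hm
    exact ⟨LinearMap.id, by simp⟩
  | succ m ih =>
    obtain ⟨i, hi⟩ : ∃ i, α i ≠ 0 := by
      by_contra! h
      simp [show α = 0 from Finsupp.ext h] at hm
    obtain ⟨β, rfl⟩ : ∃ β, α = β + Finsupp.single i 1 :=
      ⟨α - Finsupp.single i 1, (tsub_add_cancel_of_le (Finsupp.single_le_iff.mpr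
        (Nat.one_le_iff_ne_zero.mpr hi))).symm⟩
    have hβ : β.degree = m := by simpa using hm
    obtain ⟨D, hD⟩ := ih β (by omega) hβ
    have hem : ((e - m : ℕ) : K) ≠ 0 := by exact_mod_cast (by omega : e - m ≠ 0)
    refine ⟨((e - m : ℕ) : K)⁻¹ • (pderiv i).toLinearMap ∘ₗ D, fun v => ?_⟩
    simp only [LinearMap.smul_apply, LinearMap.comp_apply, Derivation.coeFn_coe, hD,
      Derivation.map_smul, pderiv_linForm_pow, smul_smul, monomial_add_single, map_mul,
      eval_X, pow_one, Nat.sub_sub]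
    congr 1
    field_simp

theorem exists_linearMap_linForm_pow {G : MvPolynomial σ K} {m e : ℕ} (hG : G.IsHomogeneous m)
    (hme : m ≤ e) :
    ∃ D : MvPolynomial σ K →ₗ[K] MvPolynomial σ K,
      ∀ v, D (linForm v ^ e) = eval v G • linForm v ^ (e - m) := by
  have hdeg : ∀ α ∈ G.support, α.degree = m := fun α hα => by
    rw [Finsupp.degree_eq_weight_one]
    exact hG (mem_support_iff.mp hα)
  choose D hD using fun α (hα : α ∈ G.support) =>
    exists_linearMap_linForm_pow_monomial (K := K) α ((hdeg α hα).trans_le hme)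
  refine ⟨∑ α ∈ G.support.attach, coeff α.1 G • D α.1 α.2, fun v => ?_⟩
  have heval : eval v G = ∑ α ∈ G.support.attach, coeff α.1 G * eval v (monomial α.1 1) := by
    conv_lhs => rw [G.as_sum, ← Finset.sum_attach]
    simp [eval_monomial]
  rw [heval, Finset.sum_smul, LinearMap.sum_apply]
  refine Finset.sum_congr rfl fun α _ => ?_
  rw [LinearMap.smul_apply, hD, hdeg α.1 α.2, smul_smul]

theorem exists_dual_linForm_pow {G : MvPolynomial σ K} {e : ℕ} (hG : G.IsHomogeneous e) :
    ∃ φ : Module.Dual K (MvPolynomial σ K), ∀ v, φ (linForm v ^ e) = eval v G := by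
  obtain ⟨D, hD⟩ := exists_linearMap_linForm_pow hG le_rfl
  exact ⟨lcoeff K 0 ∘ₗ D, fun v => by simp [hD]⟩

theorem linearIndependent_linForm_pow {ι : Type*} {w : ι → σ → K} {e : ℕ}
    (hsep : ∀ i, ∃ G : MvPolynomial σ K, G.IsHomogeneous e ∧ eval (w i) G ≠ 0 ∧
      ∀ j ≠ i, eval (w j) G = 0) :
    LinearIndependent K fun i => linForm (w i) ^ e := by
  rw [linearIndependent_iff']
  intro s c hc i hi
  obtain ⟨G, hG, hGi, hGj⟩ := hsep i
  obtain ⟨φ, hφ⟩ := exists_dual_linForm_pow hG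
  have := congrArg φ hc
  rw [map_sum, map_zero, Finset.sum_eq_single_of_mem i hi fun j _ hji => by
    rw [map_smul, hφ, hGj j hji, smul_zero], map_smul, hφ, smul_eq_mul] at this
  exact (mul_eq_zero.mp this).resolve_right hGi

theorem linForm_pow_notMem_span {ι : Type*} [Fintype ι] {w : ι → σ → K} {u : σ → K}
    (hu : u ≠ 0) {e : ℕ}
    (hsep : ∀ i, ∃ G : MvPolynomial σ K, G.IsHomogeneous e ∧ eval u G = 0 ∧
      eval (w i) G ≠ 0 ∧ ∀ j ≠ i, eval (w j) G = 0) :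
    linForm u ^ e ∉ Submodule.span K (Set.range fun i => linForm (w i) ^ e) := by
  intro h
  obtain ⟨c, hc⟩ := (Submodule.mem_span_range_iff_exists_fun K).mp h
  have hc0 : ∀ i, c i = 0 := by
    intro i
    obtain ⟨G, hG, hGu, hGi, hGj⟩ := hsep i
    obtain ⟨φ, hφ⟩ := exists_dual_linForm_pow hG
    have := congrArg φ hc
    rw [map_sum, Finset.sum_eq_single i (fun j _ hji => by rw [map_smul, hφ, hGj j hji, smul_zero])
      (by simp), map_smul, hφ, hφ, hGu, smul_eq_mul] at this
    exact (mul_eq_zero.mp this).resolve_right hGi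
  exact pow_ne_zero e (linForm_ne_zero hu) (by simp [← hc, hc0])

end MvPolynomial

theorem ImposesIndep.exists_separating {n t m : ℕ} {S : Set (Pn n)} (hind : ImposesIndep n t S)
    (htm : t ≤ m) {p : Pn n} (hp : p ∈ S) :
    ∃ G : MvPolynomial (Fin (n + 1)) ℂ, G.IsHomogeneous m ∧ eval p.rep G ≠ 0 ∧
      ∀ q ∈ S, q ≠ p → eval q.rep G = 0 := by
  classical
  obtain ⟨g, hg⟩ := hind fun x : S => if (x : Pn n) = p then 1 else 0
  obtain ⟨i, hi⟩ : ∃ i, p.rep i ≠ 0 := Function.ne_iff.mp p.rep_nonzero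
  refine ⟨g.1 * X i ^ (m - t), ?_, ?_, fun q hq hqp => ?_⟩
  · simpa [Nat.add_sub_cancel' htm] using
      ((mem_homogeneousSubmodule _ _).mp g.2).mul (isHomogeneous_X_pow i (m - t))
  · have hgp := congrFun hg ⟨p, hp⟩
    simp only at hgp
    simp [hgp, hi]
  · simp [by simpa [hqp] using congrFun hg ⟨q, hq⟩]

theorem linPow_eq_linForm_pow (n d : ℕ) (v : Fin (n + 1) → ℂ) : linPow n d v = linForm v ^ d :=
  rfl

theorem veroneseSpan_eq_span_range (n d : ℕ) (S : Set (Pn n)) :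
    veroneseSpan n d S = Submodule.span ℂ (Set.range fun p : S => linForm (p : Pn n).rep ^ d) := by
  rw [veroneseSpan, Set.image_eq_range]
  rfl

theorem finrank_veroneseSpan_le {n d : ℕ} {A : Set (Pn n)} (hA : A.Finite) :
    Module.finrank ℂ (veroneseSpan n d A) ≤ A.ncard := by
  have := hA.fintype
  rw [veroneseSpan_eq_span_range, ← Nat.card_coe_set_eq, Nat.card_eq_fintype_card]
  exact finrank_range_le_card _

theorem finrank_veroneseSpan {n t : ℕ} {S : Set (Pn n)} (hS : S.Finite)
    (hind : ImposesIndep n t S) : Module.finrank ℂ (veroneseSpan n (t + 1) S) = S.ncard := by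
  have := hS.fintype
  rw [veroneseSpan_eq_span_range, finrank_span_eq_card, ← Nat.card_coe_set_eq,
    Nat.card_eq_fintype_card]
  refine linearIndependent_linForm_pow fun p => ?_
  obtain ⟨G, hG, hGp, hGq⟩ := hind.exists_separating (Nat.le_succ t) p.2
  exact ⟨G, hG, hGp, fun q hqp => hGq q q.2 (Subtype.coe_ne_coe.mpr hqp)⟩

theorem linPow_notMem_veroneseSpan {n t : ℕ} {S : Set (Pn n)} (hS : S.Finite)
    (hind : ImposesIndep n t S) {a : Pn n} (ha : a ∉ S) :
    linPow n (t + 1) a.rep ∉ veroneseSpan n (t + 1) S := by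
  have := hS.fintype
  rw [veroneseSpan_eq_span_range]
  refine linForm_pow_notMem_span a.rep_nonzero fun p => ?_
  obtain ⟨u, hua, hup⟩ := exists_eval_linForm_eq_zero_ne_zero (ne_of_mem_of_not_mem p.2 ha)
  obtain ⟨F, hF, hFp, hFq⟩ := hind.exists_separating le_rfl p.2
  refine ⟨linForm u * F, by simpa [add_comm] using (isHomogeneous_linForm u).mul hF,
    by simp [hua], by simp [hup, hFp], fun q hqp => ?_⟩
  simp [hFq q q.2 (Subtype.coe_ne_coe.mpr hqp)]

theorem veroneseSpan_le_of_minSpansVer {n d t k : ℕ} {S A : Set (Pn n)}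
    {q : Projectivization ℂ (homogeneousSubmodule (Fin (n + 1)) ℂ d)}
    (hmin : MinSpansVer n d S q) (hind : ImposesIndep n t S) (htk : t + k ≤ d)
    (hA : (Projectivization.rep q).1 ∈ veroneseSpan n d A) :
    veroneseSpan n k S ≤ veroneseSpan n k A := by
  rw [veroneseSpan, Submodule.span_le]
  rintro _ ⟨p, hp, rfl⟩
  change linForm p.rep ^ k ∈ veroneseSpan n k A
  obtain ⟨G, hG, hGp, hGq⟩ := hind.exists_separating (m := d - k) (by omega) hp
  obtain ⟨D, hD⟩ := exists_linearMap_linForm_pow hG (Nat.sub_le d k)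
  rw [Nat.sub_sub_self (by omega)] at hD
  have hDA : veroneseSpan n d A ≤ (veroneseSpan n k A).comap D := by
    rw [veroneseSpan, Submodule.span_le]
    rintro _ ⟨a, ha, rfl⟩
    change D (linForm a.rep ^ d) ∈ veroneseSpan n k A
    rw [hD]
    exact Submodule.smul_mem _ _ (Submodule.subset_span ⟨a, ha, rfl⟩)
  have hDS : veroneseSpan n d (S \ {p}) ≤ LinearMap.ker D := by
    rw [veroneseSpan, Submodule.span_le]
    rintro _ ⟨r, hr, rfl⟩
    simp [linPow_eq_linForm_pow, hD, hGq r hr.1 hr.2]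
  obtain ⟨c, y, hy, hF⟩ : ∃ c : ℂ, ∃ y ∈ veroneseSpan n d (S \ {p}),
      (Projectivization.rep q).1 = c • linPow n d p.rep + y := by
    have hF := hmin.1
    rw [veroneseSpan, ← Set.insert_eq_of_mem hp, ← Set.insert_sdiff_singleton,
      Set.image_insert_eq] at hF
    exact Submodule.mem_span_insert.mp hF
  have hc : c ≠ 0 := by
    rintro rfl
    exact hmin.2 _ (Set.sdiff_singleton_ssubset.mpr hp) (by simpa [hF] using hy)
  have hDF := hDA hA
  rw [Submodule.mem_comap, hF, map_add, map_smul, LinearMap.mem_ker.mp (hDS hy), add_zero,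
    linPow_eq_linForm_pow, hD, smul_smul] at hDF
  simpa only [smul_smul, inv_mul_cancel₀ (mul_ne_zero hc hGp), one_smul] using
    Submodule.smul_mem _ (c * eval p.rep G)⁻¹ hDF

theorem stmt_14_general (n d : ℕ) (hd : 4 ≤ d)
    (q : Projectivization ℂ (homogeneousSubmodule (Fin (n + 1)) ℂ d))
    (S : Set (Pn n)) (hS : S.Finite) (hmin : MinSpansVer n d S q)
    (hind : ImposesIndep n (d / 2 - 1) S) :
    ∀ A : Set (Pn n), A.Finite → A.ncard ≤ S.ncard →
      (Projectivization.rep q).1 ∈ veroneseSpan n d A → A = S := by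
  intro A hA hcardA hqA
  set t := d / 2 - 1
  have : FiniteDimensional ℂ (veroneseSpan n (t + 1) A) :=
    FiniteDimensional.span_of_finite ℂ (hA.image _)
  have hle := veroneseSpan_le_of_minSpansVer (k := t + 1) hmin hind (by omega) hqA
  have hrankS := finrank_veroneseSpan hS hind
  have hrankA := finrank_veroneseSpan_le (d := t + 1) hA
  have hSA : S.ncard ≤ A.ncard := hrankS ▸ (Submodule.finrank_mono hle).trans hrankA
  have heq : veroneseSpan n (t + 1) S = veroneseSpan n (t + 1) A :=
    Submodule.eq_of_le_of_finrank_le hle (by omega)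
  have hsub : A ⊆ S := fun a ha => by_contra fun haS =>
    linPow_notMem_veroneseSpan hS hind haS (heq ▸ Submodule.subset_span ⟨a, ha, rfl⟩)
  exact Set.eq_of_subset_of_ncard_le hsub hSA hS

/-- Theorem 1 (b): if `ν_d(S)` minimally spans `q`, `|S| ≤ C(n+k-1,n)` with
`k = ⌊d/2⌋`, and `S` imposes independent conditions on degree-`(k-1)` forms, then `S` is the
unique set of cardinality at most `|S|` whose Veronese image spans `q`; in particular `q` has
rank `|S|` and the additive decomposition is unique. -/
theorem stmt_14 (n d : ℕ) (hn : 1 ≤ n) (hd : 4 ≤ d)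
    (q : Projectivization ℂ (homogeneousSubmodule (Fin (n + 1)) ℂ d))
    (S : Set (Pn n)) (hS : S.Finite) (hmin : MinSpansVer n d S q)
    (hcard : S.ncard ≤ Nat.choose (n + d / 2 - 1) n)
    (hind : ImposesIndep n (d / 2 - 1) S) :
    ∀ A : Set (Pn n), A.Finite → A.ncard ≤ S.ncard →
      (Projectivization.rep q).1 ∈ veroneseSpan n d A → A = S :=
  stmt_14_general n d hd q S hS hmin hind
end
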